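/- arXiv:2009.13128 — 5 statements merged into one kernel-verified Lean document; each statement's English description precedes it below -/
import Mathlib

section
/- For every multivariate polynomial f ∈ ℚ[x₁,…,x_k] there exist rationals A ≥ 0 and B > 0, a natural number m, positive rationals ã₁,…,ã_m, a rational b̃ ≥ 0 with ∑_{i=1}^m ã_i + b̃ < 1, and nonempty products h₁,…,h_m of factors drawn from {x_j, 1 − x_j : 1 ≤ j ≤ k}, such that f + A = B · (∑_{i=1}^{m} ã_i · h_i + b̃) as polynomials. -/
/-!
Call a polynomial *representable* if it is a positive combination of nonempty products of
factors `x_j`, `1 - x_j`, plus a constant. Constants are representable, sums of representable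
polynomials are representable, and so is `g * x_j` for representable `g`: products absorb the
new factor `x_j`, and a constant `c < 0` is handled by `c x_j = c + (-c) (1 - x_j)`. By induction
on `f`, every polynomial is representable, `f = ∑ aᵢ hᵢ + c`. Shifting by `A = max (-c) 0` and
dividing by `B = ∑ aᵢ + max c 0 + 1` gives the subprobability form.
-/

open MvPolynomial

namespace MvPolynomial

variable {σ K : Type*} [Fintype σ]

section CommRing

variable [CommRing K]

noncomputable def prodXOneSubX (e e' : σ → ℕ) : MvPolynomial σ K :=
  ∏ j, X j ^ e j * (1 - X j) ^ e' j

variable [DecidableEq σ]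

theorem prodXOneSubX_add_single_left (e e' : σ → ℕ) (n : σ) :
    (prodXOneSubX (e + Pi.single n 1) e' : MvPolynomial σ K) = prodXOneSubX e e' * X n := by
  simp only [prodXOneSubX, Pi.add_apply, pow_add, mul_right_comm _ (X _ ^ _),
    Finset.prod_mul_distrib]
  simp [Pi.single_apply, pow_ite]

theorem prodXOneSubX_zero_single (n : σ) :
    (prodXOneSubX 0 (Pi.single n 1) : MvPolynomial σ K) = 1 - X n := by
  simp [prodXOneSubX, Pi.single_apply, pow_ite]

end CommRing

section Cone

variable [CommRing K] [LinearOrder K]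

noncomputable def xOneSubXCone : AddSubmonoid (MvPolynomial σ K) :=
  AddSubmonoid.closure {p | ∃ (a : K) (e e' : σ → ℕ),
    0 < a ∧ (∃ j, e j ≠ 0 ∨ e' j ≠ 0) ∧ p = C a * prodXOneSubX e e'}

theorem mul_X_mem_xOneSubXCone {g : MvPolynomial σ K} (hg : g ∈ xOneSubXCone) (n : σ) :
    g * X n ∈ xOneSubXCone := by
  classical
  induction hg using AddSubmonoid.closure_induction with
  | mem p hp =>
    obtain ⟨a, e, e', ha, -, rfl⟩ := hp
    refine AddSubmonoid.subset_closure ⟨a, e + Pi.single n 1, e', ha, ⟨n, Or.inl ?_⟩, ?_⟩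
    · simp
    · rw [prodXOneSubX_add_single_left, mul_assoc]
  | zero => simp
  | add p q _ _ hp hq => simpa [add_mul] using add_mem hp hq

theorem C_mul_X_mem_xOneSubXCone_add_C [IsStrictOrderedRing K] (c : K) (n : σ) :
    ∃ g ∈ (xOneSubXCone : AddSubmonoid (MvPolynomial σ K)), ∃ c', C c * X n = g + C c' := by
  classical
  rcases lt_trichotomy c 0 with hc | rfl | hc
  · refine ⟨C (-c) * prodXOneSubX 0 (Pi.single n 1), AddSubmonoid.subset_closure
      ⟨-c, 0, Pi.single n 1, neg_pos.2 hc, ⟨n, Or.inr (by simp)⟩, rfl⟩, c, ?_⟩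
    rw [prodXOneSubX_zero_single, map_neg]
    ring
  · exact ⟨0, zero_mem _, 0, by simp⟩
  · refine ⟨C c * prodXOneSubX (Pi.single n 1) 0, AddSubmonoid.subset_closure
      ⟨c, Pi.single n 1, 0, hc, ⟨n, Or.inl (by simp)⟩, rfl⟩, 0, ?_⟩
    rw [← zero_add (Pi.single n 1), prodXOneSubX_add_single_left]
    simp [prodXOneSubX]

theorem exists_mem_xOneSubXCone_add_C [IsStrictOrderedRing K] (f : MvPolynomial σ K) :
    ∃ g ∈ (xOneSubXCone : AddSubmonoid (MvPolynomial σ K)), ∃ c, f = g + C c := by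
  induction f using induction_on with
  | C c => exact ⟨0, zero_mem _, c, (zero_add _).symm⟩
  | add p q hp hq =>
    obtain ⟨g, hg, c, rfl⟩ := hp
    obtain ⟨g', hg', c', rfl⟩ := hq
    exact ⟨g + g', add_mem hg hg', c + c', by rw [C_add]; ring⟩
  | mul_X p n hp =>
    obtain ⟨g, hg, c, rfl⟩ := hp
    obtain ⟨g', hg', c', hc'⟩ := C_mul_X_mem_xOneSubXCone_add_C c n
    exact ⟨g * X n + g', add_mem (mul_X_mem_xOneSubXCone hg n) hg', c', by
      rw [add_mul, hc', add_assoc]⟩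

theorem exists_sum_eq_of_mem_xOneSubXCone {g : MvPolynomial σ K} (hg : g ∈ xOneSubXCone) :
    ∃ (m : ℕ) (a : Fin m → K) (e e' : Fin m → σ → ℕ), (∀ i, 0 < a i) ∧
      (∀ i, ∃ j, e i j ≠ 0 ∨ e' i j ≠ 0) ∧ g = ∑ i, C (a i) * prodXOneSubX (e i) (e' i) := by
  obtain ⟨l, hl, rfl⟩ := AddSubmonoid.exists_list_of_mem_closure hg
  choose a e e' ha he hl using fun i : Fin l.length => hl l[i] (l.getElem_mem i.2)
  exact ⟨l.length, a, e, e', ha, he, by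
    rw [← Fin.sum_univ_getElem]; exact Fintype.sum_congr _ _ hl⟩

end Cone

end MvPolynomial

theorem exists_subprobability_rescaling {K : Type*} [Field K] [LinearOrder K]
    [IsStrictOrderedRing K] {m : ℕ} (a : Fin m → K) (ha : ∀ i, 0 < a i) (c : K) :
    ∃ A B b : K, 0 ≤ A ∧ 0 < B ∧ 0 ≤ b ∧ (∑ i, a i / B) + b < 1 ∧ c + A = B * b := by
  have hsum : 0 ≤ ∑ i, a i := Finset.sum_nonneg fun i _ => (ha i).le
  set B := (∑ i, a i) + max c 0 + 1
  have hB : 0 < B := by positivity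
  refine ⟨max (-c) 0, B, max c 0 / B, le_max_right _ _, hB, by positivity, ?_, ?_⟩
  · rw [← Finset.sum_div, ← add_div, div_lt_one hB]
    linarith
  · rw [mul_div_cancel₀ _ hB.ne']
    rcases le_total c 0 with hc | hc <;> simp [hc]

/-- Normalization step in the paper's Proposition 8: for every `f ∈ ℚ[x₁,…,x_k]` there are
rationals `A ≥ 0`, `B > 0`, positive rationals `a₁,…,a_m`, a rational `b ≥ 0` with
`∑ i, a i + b < 1`, and nonempty products `h i = ∏ j, x_j ^ e i j * (1 - x_j) ^ e' i j`
such that `f + A = B * (∑ i, a i • h i + b)` as polynomials. -/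
theorem poly_subprobability_form (k : ℕ) (f : MvPolynomial (Fin k) ℚ) :
    ∃ (A B : ℚ) (m : ℕ) (a : Fin m → ℚ) (b : ℚ) (e e' : Fin m → Fin k → ℕ),
      0 ≤ A ∧ 0 < B ∧
      (∀ i, 0 < a i) ∧ 0 ≤ b ∧ (∑ i, a i) + b < 1 ∧
      (∀ i, ∃ j, e i j ≠ 0 ∨ e' i j ≠ 0) ∧
      f + C A =
        C B * ((∑ i, C (a i) * ∏ j, (X j ^ e i j * (1 - X j) ^ e' i j)) + C b) := by
  obtain ⟨g, hg, c, rfl⟩ := exists_mem_xOneSubXCone_add_C f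
  obtain ⟨m, a, e, e', ha, he, rfl⟩ := exists_sum_eq_of_mem_xOneSubXCone hg
  obtain ⟨A, B, b, hA, hB, hb, hlt, hcA⟩ := exists_subprobability_rescaling a ha c
  refine ⟨A, B, m, fun i => a i / B, b, e, e', hA, hB, fun i => div_pos (ha i) hB, hb, hlt,
    he, ?_⟩
  have hC : ∀ i, (C B * C (a i / B) : MvPolynomial (Fin k) ℚ) = C (a i) := fun i => by
    rw [← C_mul, mul_div_cancel₀ _ hB.ne']
  simp only [mul_add, Finset.mul_sum, ← mul_assoc, hC, ← C_mul, ← hcA, C_add, add_assoc,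
    prodXOneSubX]
end

section
/- For every finite Markov chain D = (n, ι, P), every state s and every target set T ⊆ Fin n, the family of masses of hitting paths from s to T is summable, and the reachability probability Pr_{D,s}(◇T) satisfies 0 ≤ Pr_{D,s}(◇T) ≤ 1. -/
/-- A finite path in state space `S`: a length `m` together with `m + 1` states. -/
abbrev MCPath (S : Type) : Type := Σ m : ℕ, Fin (m + 1) → S

/-- The mass of a path: the product of the transition probabilities along it. -/
def pathMass {S : Type} (P : S → S → ℝ) (π : MCPath S) : ℝ :=
  ∏ i : Fin π.1, P (π.2 i.castSucc) (π.2 i.succ)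

/-- A hitting path from `s` to `T`: it starts in `s`, ends in `T`, and no proper prefix
visits `T`. -/
def IsHitting {S : Type} (T : Set S) (s : S) (π : MCPath S) : Prop :=
  π.2 0 = s ∧ π.2 (Fin.last π.1) ∈ T ∧ ∀ i : Fin π.1, π.2 i.castSucc ∉ T

/-- The reachability probability `Pr_{P,s}(◇T)`: the sum of the masses of all hitting
paths from `s` to `T`. -/
noncomputable def reachProb {S : Type} (P : S → S → ℝ) (T : Set S) (s : S) : ℝ :=
  ∑' π : {π : MCPath S // IsHitting T s π}, pathMass P π.1

open Classical in
/-- Sum of masses of hitting paths of length exactly `m`. -/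
noncomputable def exactSum {n : ℕ} (P : Fin n → Fin n → ℝ) (T : Set (Fin n)) (m : ℕ)
    (s : Fin n) : ℝ :=
  ∑ f : Fin (m + 1) → Fin n, if IsHitting T s ⟨m, f⟩ then pathMass P ⟨m, f⟩ else 0

/-- Sum of masses of hitting paths of length at most `N`. -/
noncomputable def hitSum {n : ℕ} (P : Fin n → Fin n → ℝ) (T : Set (Fin n)) (N : ℕ)
    (s : Fin n) : ℝ :=
  ∑ m ∈ Finset.range (N + 1), exactSum P T m s

lemma pathMass_nonneg {n : ℕ} {P : Fin n → Fin n → ℝ} (hpos : ∀ s s', 0 ≤ P s s')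
    (π : MCPath (Fin n)) : 0 ≤ pathMass P π :=
  Finset.prod_nonneg fun _ _ => hpos _ _

lemma pathMass_cons {n : ℕ} (P : Fin n → Fin n → ℝ) (m : ℕ) (x : Fin n)
    (g : Fin (m + 1) → Fin n) :
    pathMass P ⟨m + 1, Fin.cons x g⟩ = P x (g 0) * pathMass P ⟨m, g⟩ := by
  have h1 : pathMass P ⟨m + 1, Fin.cons x g⟩
      = ∏ i : Fin (m + 1),
          P ((Fin.cons x g : Fin (m + 2) → Fin n) i.castSucc)
            ((Fin.cons x g : Fin (m + 2) → Fin n) i.succ) := rfl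
  have h2 : pathMass P ⟨m, g⟩ = ∏ i : Fin m, P (g i.castSucc) (g i.succ) := rfl
  rw [h1, h2, Fin.prod_univ_succ]
  congr 1

lemma hitting_cons_iff {n : ℕ} {T : Set (Fin n)} {s : Fin n} (hs : s ∉ T) (m : ℕ)
    (x : Fin n) (g : Fin (m + 1) → Fin n) :
    IsHitting T s ⟨m + 1, Fin.cons x g⟩ ↔ x = s ∧ IsHitting T (g 0) ⟨m, g⟩ := by
  constructor
  · rintro ⟨h0, hlast, hni⟩
    have h0' : x = s := by simpa using h0
    refine ⟨h0', rfl, ?_, ?_⟩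
    · have : (Fin.cons x g : Fin (m + 2) → Fin n) (Fin.last (m + 1)) ∈ T := hlast
      rwa [show Fin.last (m + 1) = (Fin.last m).succ from rfl, Fin.cons_succ] at this
    · intro i
      have h : (Fin.cons x g : Fin (m + 2) → Fin n) (i.castSucc).succ ∉ T := hni i.succ
      rw [Fin.cons_succ] at h
      exact h
  · rintro ⟨hx, h0, hlast, hni⟩
    refine ⟨by simpa using hx, ?_, ?_⟩
    · show (Fin.cons x g : Fin (m + 2) → Fin n) (Fin.last (m + 1)) ∈ T
      rw [show Fin.last (m + 1) = (Fin.last m).succ from rfl, Fin.cons_succ]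
      exact hlast
    · intro i
      induction i using Fin.cases with
      | zero =>
        show (Fin.cons x g : Fin (m + 2) → Fin n) ((0 : Fin (m + 1)).castSucc) ∉ T
        rw [Fin.castSucc_zero, Fin.cons_zero, hx]
        exact hs
      | succ j =>
        show (Fin.cons x g : Fin (m + 2) → Fin n) (j.castSucc).succ ∉ T
        rw [Fin.cons_succ]
        exact hni j

lemma exactSum_nonneg {n : ℕ} {P : Fin n → Fin n → ℝ} (hpos : ∀ s s', 0 ≤ P s s')
    (T : Set (Fin n)) (m : ℕ) (s : Fin n) : 0 ≤ exactSum P T m s := by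
  classical
  refine Finset.sum_nonneg fun f _ => ?_
  split
  · exact pathMass_nonneg hpos _
  · exact le_refl 0

lemma exactSum_zero_mem {n : ℕ} {P : Fin n → Fin n → ℝ} {T : Set (Fin n)} {s : Fin n}
    (hs : s ∈ T) : exactSum P T 0 s = 1 := by
  classical
  unfold exactSum
  rw [Fintype.sum_eq_single (fun _ : Fin 1 => s)]
  · have : IsHitting T s ⟨0, fun _ => s⟩ := ⟨rfl, hs, fun i => i.elim0⟩
    simp [this, pathMass]
  · intro f hf
    have : ¬ IsHitting T s ⟨0, f⟩ := by
      intro h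
      apply hf
      funext i
      have hi : i = 0 := Subsingleton.elim _ _
      rw [hi]; exact h.1
    simp [this]

lemma exactSum_succ_mem {n : ℕ} {P : Fin n → Fin n → ℝ} {T : Set (Fin n)} {s : Fin n}
    (hs : s ∈ T) (m : ℕ) : exactSum P T (m + 1) s = 0 := by
  classical
  unfold exactSum
  refine Finset.sum_eq_zero fun f _ => ?_
  have : ¬ IsHitting T s ⟨m + 1, f⟩ := by
    rintro ⟨h0, -, hni⟩
    have h0' : f 0 = s := h0
    exact hni 0 (show f 0 ∈ T from h0'.symm ▸ hs)
  simp [this]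

lemma exactSum_zero_notMem {n : ℕ} {P : Fin n → Fin n → ℝ} {T : Set (Fin n)} {s : Fin n}
    (hs : s ∉ T) : exactSum P T 0 s = 0 := by
  classical
  unfold exactSum
  refine Finset.sum_eq_zero fun f _ => ?_
  have : ¬ IsHitting T s ⟨0, f⟩ := by
    rintro ⟨h0, hlast, -⟩
    have h0' : f 0 = s := h0
    have hl : f 0 ∈ T := hlast
    exact hs (h0' ▸ hl)
  simp [this]

lemma exactSum_succ_notMem {n : ℕ} {P : Fin n → Fin n → ℝ} {T : Set (Fin n)} {s : Fin n}
    (hs : s ∉ T) (m : ℕ) :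
    exactSum P T (m + 1) s = ∑ s', P s s' * exactSum P T m s' := by
  classical
  unfold exactSum
  rw [← (Fin.consEquiv (fun _ : Fin (m + 2) => Fin n)).sum_comp, Fintype.sum_prod_type]
  have lhs_eq : ∀ x : Fin n, ∀ g : Fin (m + 1) → Fin n,
      (if IsHitting T s ⟨m + 1, Fin.cons x g⟩ then pathMass P ⟨m + 1, Fin.cons x g⟩ else 0)
      = if x = s then
          (if IsHitting T (g 0) ⟨m, g⟩ then P s (g 0) * pathMass P ⟨m, g⟩ else 0) else 0 := by
    intro x g
    by_cases hx : x = s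
    · subst hx
      by_cases hg : IsHitting T (g 0) ⟨m, g⟩
      · rw [if_pos ((hitting_cons_iff hs m x g).2 ⟨rfl, hg⟩), pathMass_cons]
        simp [hg]
      · rw [if_neg (fun h => hg ((hitting_cons_iff hs m x g).1 h).2)]
        simp [hg]
    · rw [if_neg (fun h => hx ((hitting_cons_iff hs m x g).1 h).1), if_neg hx]
  calc ∑ x : Fin n, ∑ g : Fin (m + 1) → Fin n,
        (if IsHitting T s ⟨m + 1, (Fin.consEquiv _) (x, g)⟩
          then pathMass P ⟨m + 1, (Fin.consEquiv _) (x, g)⟩ else 0)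
      = ∑ x : Fin n, ∑ g : Fin (m + 1) → Fin n, (if x = s then
          (if IsHitting T (g 0) ⟨m, g⟩ then P s (g 0) * pathMass P ⟨m, g⟩ else 0) else 0) := by
        refine Finset.sum_congr rfl fun x _ => Finset.sum_congr rfl fun g _ => lhs_eq x g
    _ = ∑ g : Fin (m + 1) → Fin n,
          (if IsHitting T (g 0) ⟨m, g⟩ then P s (g 0) * pathMass P ⟨m, g⟩ else 0) := by
        rw [Finset.sum_comm]
        refine Finset.sum_congr rfl fun g _ => ?_
        rw [Finset.sum_ite_eq' Finset.univ s]
        simp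
    _ = ∑ g : Fin (m + 1) → Fin n, ∑ s' : Fin n, (if s' = g 0 then
          (if IsHitting T (g 0) ⟨m, g⟩ then P s (g 0) * pathMass P ⟨m, g⟩ else 0) else 0) := by
        refine Finset.sum_congr rfl fun g _ => ?_
        rw [Finset.sum_ite_eq' Finset.univ (g 0)]
        simp
    _ = ∑ s' : Fin n, ∑ g : Fin (m + 1) → Fin n,
          (if IsHitting T s' ⟨m, g⟩ then P s s' * pathMass P ⟨m, g⟩ else 0) := by
        rw [Finset.sum_comm]
        refine Finset.sum_congr rfl fun s' _ => Finset.sum_congr rfl fun g _ => ?_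
        by_cases h : s' = g 0
        · subst h; simp
        · have : ¬ IsHitting T s' ⟨m, g⟩ := fun hh => h hh.1.symm
          simp [h, this]
    _ = ∑ s', P s s' * ∑ g : Fin (m + 1) → Fin n,
          (if IsHitting T s' ⟨m, g⟩ then pathMass P ⟨m, g⟩ else 0) := by
        refine Finset.sum_congr rfl fun s' _ => ?_
        rw [Finset.mul_sum]
        refine Finset.sum_congr rfl fun g _ => ?_
        rw [mul_ite, mul_zero]

lemma hitSum_le_one {n : ℕ} {P : Fin n → Fin n → ℝ} (hpos : ∀ s s', 0 ≤ P s s')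
    (hrow : ∀ s, ∑ s', P s s' = 1) (T : Set (Fin n)) :
    ∀ N s, hitSum P T N s ≤ 1 := by
  intro N
  induction N with
  | zero =>
    intro s
    by_cases hs : s ∈ T
    · simp [hitSum, exactSum_zero_mem hs]
    · simp [hitSum, exactSum_zero_notMem hs]
  | succ N ih =>
    intro s
    unfold hitSum
    rw [Finset.sum_range_succ']
    by_cases hs : s ∈ T
    · simp only [exactSum_succ_mem hs, exactSum_zero_mem hs, Finset.sum_const_zero]
      norm_num
    · simp only [exactSum_succ_notMem hs, exactSum_zero_notMem hs, add_zero]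
      rw [Finset.sum_comm]
      calc ∑ s', ∑ m ∈ Finset.range (N + 1), P s s' * exactSum P T m s'
          = ∑ s', P s s' * hitSum P T N s' := by
            refine Finset.sum_congr rfl fun s' _ => ?_
            rw [hitSum, Finset.mul_sum]
        _ ≤ ∑ s', P s s' * 1 := by
            refine Finset.sum_le_sum fun s' _ => ?_
            exact mul_le_mul_of_nonneg_left (ih s') (hpos s s')
        _ = 1 := by simpa using hrow s

/-- For every finite Markov chain, state `s` and target set `T`, the family of masses of
hitting paths from `s` to `T` is summable and the reachability probability lies in `[0,1]`. -/
theorem reachProb_summable_and_mem_Icc {n : ℕ} (ι : Fin n) (P : Fin n → Fin n → ℝ)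
    (hpos : ∀ s s', 0 ≤ P s s') (hrow : ∀ s, ∑ s', P s s' = 1)
    (s : Fin n) (T : Set (Fin n)) :
    Summable (fun π : {π : MCPath (Fin n) // IsHitting T s π} => pathMass P π.1) ∧
    0 ≤ reachProb P T s ∧ reachProb P T s ≤ 1 := by
  classical
  have hnn : 0 ≤ fun π : {π : MCPath (Fin n) // IsHitting T s π} => pathMass P π.1 :=
    fun π => pathMass_nonneg hpos π.1
  have key : ∀ F : Finset {π : MCPath (Fin n) // IsHitting T s π},
      ∑ π ∈ F, pathMass P π.1 ≤ 1 := by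
    intro F
    set N := F.sup (fun π => π.1.1) with hN
    set G : Finset (MCPath (Fin n)) :=
      (Finset.range (N + 1)).sigma (fun m => (Finset.univ : Finset (Fin (m + 1) → Fin n)))
      with hG
    have himg : ∑ π ∈ F, pathMass P π.1 = ∑ π ∈ F.image Subtype.val, pathMass P π := by
      rw [Finset.sum_image]
      intro a _ b _ h
      exact Subtype.ext h
    rw [himg]
    have hsub : F.image Subtype.val ⊆ G := by
      intro π hπ
      rcases Finset.mem_image.1 hπ with ⟨π', hπ', rfl⟩
      rw [hG, Finset.mem_sigma]
      exact ⟨Finset.mem_range.2 (Nat.lt_succ_of_le (Finset.le_sup (f := fun π => π.1.1) hπ')),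
        Finset.mem_univ _⟩
    calc ∑ π ∈ F.image Subtype.val, pathMass P π
        = ∑ π ∈ F.image Subtype.val,
            (if IsHitting T s π then pathMass P π else 0) := by
          refine Finset.sum_congr rfl fun π hπ => ?_
          rcases Finset.mem_image.1 hπ with ⟨π', _, rfl⟩
          rw [if_pos π'.2]
      _ ≤ ∑ π ∈ G, (if IsHitting T s π then pathMass P π else 0) := by
          refine Finset.sum_le_sum_of_subset_of_nonneg hsub fun π _ _ => ?_
          split
          · exact pathMass_nonneg hpos π
          · exact le_refl 0
      _ = hitSum P T N s := by
          rw [hG, Finset.sum_sigma]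
          rfl
      _ ≤ 1 := hitSum_le_one hpos hrow T N s
  have hsummable : Summable (fun π : {π : MCPath (Fin n) // IsHitting T s π} =>
      pathMass P π.1) := summable_of_sum_le hnn key
  exact ⟨hsummable, tsum_nonneg (fun π => pathMass_nonneg hpos π.1),
    Summable.tsum_le_of_sum_le hsummable key⟩
end

section
/- Let D = (n, ι, P) be a finite Markov chain with target set T ⊆ Fin n and let w ∉ T be a state such that every hitting path from ι to T with nonzero mass contains w. Then Pr_{D,ι}(◇T) = Pr_{D,ι}(◇{w}) · Pr_{D,w}(◇T). -/
/-!
Concatenation maps a pair of hitting paths `ι → {w}` and `w → T` to a path `ι → T` of mass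
the product of their masses. It is injective, because a hitting path to `{w}` ends at its
first visit of `w`, and its image contains every positive-mass hitting path `ι → T`: such a
path visits `w` and splits there. A pair whose first component has positive mass does
concatenate to a hitting path, since that component cannot meet `T`. Summing in `ℝ≥0∞`
makes the rearrangement of the series free of summability conditions.
-/

open Finset Function
open scoped ENNReal

namespace MCPath

variable {S : Type}

/-- The `i`-th state of a path, read as the last state once `i` exceeds the length. -/
def get (π : MCPath S) (i : ℕ) : S :=
  π.2 ⟨min i π.1, Nat.lt_succ_of_le (min_le_right _ _)⟩

def ofFn (m : ℕ) (f : ℕ → S) : MCPath S := ⟨m, fun i => f i⟩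

@[simp] lemma get_val (π : MCPath S) (i : Fin (π.1 + 1)) : π.get i = π.2 i := by
  simp [get, min_eq_left (Nat.le_of_lt_succ i.isLt)]

lemma get_ofFn {m i : ℕ} {f : ℕ → S} (hi : i ≤ m) : (ofFn m f).get i = f i := by
  simp [get, ofFn, min_eq_left hi]

lemma ext {π π' : MCPath S} (hlen : π.1 = π'.1) (h : ∀ i ≤ π.1, π.get i = π'.get i) :
    π = π' := by
  obtain ⟨m, f⟩ := π
  obtain ⟨m', f'⟩ := π'
  obtain rfl : m = m' := hlen
  congr
  funext i
  simpa using h i i.is_le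

lemma exists_get_eq_iff {π : MCPath S} {x : S} :
    (∃ i : Fin (π.1 + 1), π.2 i = x) ↔ ∃ i ≤ π.1, π.get i = x :=
  ⟨fun ⟨i, h⟩ => ⟨i, i.is_le, by rw [get_val, h]⟩,
    fun ⟨i, hi, h⟩ => ⟨⟨i, Nat.lt_succ_of_le hi⟩, by rw [← get_val]; exact h⟩⟩

lemma pathMass_eq_prod_range (P : S → S → ℝ) (π : MCPath S) :
    pathMass P π = ∏ i ∈ range π.1, P (π.get i) (π.get (i + 1)) := by
  rw [pathMass, ← Fin.prod_univ_eq_prod_range]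
  refine prod_congr rfl fun i _ => ?_
  rw [← get_val, ← get_val]
  rfl

lemma pathMass_nonneg {P : S → S → ℝ} (hpos : ∀ s s', 0 ≤ P s s') (π : MCPath S) :
    0 ≤ pathMass P π :=
  prod_nonneg fun _ _ => hpos _ _

lemma isHitting_iff {T : Set S} {s : S} {π : MCPath S} :
    IsHitting T s π ↔ π.get 0 = s ∧ π.get π.1 ∈ T ∧ ∀ i < π.1, π.get i ∉ T := by
  simp only [IsHitting, ← get_val, Fin.forall_iff, Fin.val_zero, Fin.val_last,
    Fin.val_castSucc]

def append (a b : MCPath S) : MCPath S :=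
  ofFn (a.1 + b.1) fun i => if i ≤ a.1 then a.get i else b.get (i - a.1)

def take (π : MCPath S) (k : ℕ) : MCPath S := ofFn k π.get

def drop (π : MCPath S) (k : ℕ) : MCPath S := ofFn (π.1 - k) fun i => π.get (k + i)

@[simp] lemma append_fst (a b : MCPath S) : (append a b).1 = a.1 + b.1 := rfl

@[simp] lemma take_fst (π : MCPath S) (k : ℕ) : (take π k).1 = k := rfl

@[simp] lemma drop_fst (π : MCPath S) (k : ℕ) : (drop π k).1 = π.1 - k := rfl

lemma get_append_of_le {a b : MCPath S} {i : ℕ} (hi : i ≤ a.1) :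
    (append a b).get i = a.get i := by
  rw [append, get_ofFn (by omega), if_pos hi]

lemma get_append_of_ge {a b : MCPath S} (hab : b.get 0 = a.get a.1) {i : ℕ} (hi : a.1 ≤ i)
    (hi' : i ≤ a.1 + b.1) : (append a b).get i = b.get (i - a.1) := by
  rw [append, get_ofFn hi']
  split_ifs with h
  · obtain rfl : i = a.1 := by omega
    rw [Nat.sub_self, hab]
  · rfl

lemma get_take {π : MCPath S} {k i : ℕ} (hi : i ≤ k) : (take π k).get i = π.get i :=
  get_ofFn hi

lemma get_drop {π : MCPath S} {k i : ℕ} (hi : i ≤ π.1 - k) :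
    (drop π k).get i = π.get (k + i) :=
  get_ofFn hi

lemma take_append (a b : MCPath S) : take (append a b) a.1 = a :=
  ext rfl fun _ hi => by rw [take_fst] at hi; rw [get_take hi, get_append_of_le hi]

lemma drop_append {a b : MCPath S} (hab : b.get 0 = a.get a.1) : drop (append a b) a.1 = b :=
  ext (by simp) fun i hi => by
    simp only [drop_fst, append_fst] at hi
    rw [get_drop (by simpa using hi), get_append_of_ge hab (by omega) (by omega),
      Nat.add_sub_cancel_left]

lemma append_take_drop {π : MCPath S} {k : ℕ} (hk : k ≤ π.1) :
    append (take π k) (drop π k) = π :=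
  ext (by simp [hk]) fun i hi => by
    simp only [append_fst, take_fst, drop_fst] at hi
    have hab : (drop π k).get 0 = (take π k).get (take π k).1 := by
      rw [get_drop (Nat.zero_le _), take_fst, get_take le_rfl, Nat.add_zero]
    rcases le_total i k with hik | hki
    · rw [get_append_of_le hik, get_take hik]
    · rw [get_append_of_ge hab hki hi, get_drop (by simp; omega), take_fst,
        Nat.add_sub_cancel' hki]

lemma pathMass_append (P : S → S → ℝ) {a b : MCPath S} (hab : b.get 0 = a.get a.1) :
    pathMass P (append a b) = pathMass P a * pathMass P b := by
  simp only [pathMass_eq_prod_range, append_fst, prod_range_add]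
  congr 1
  · refine prod_congr rfl fun i hi => ?_
    have hi := mem_range.mp hi
    rw [get_append_of_le hi.le, get_append_of_le hi]
  · refine prod_congr rfl fun i hi => ?_
    have hi := mem_range.mp hi
    rw [get_append_of_ge hab (by omega) (by omega),
      get_append_of_ge hab (by omega) (by omega), Nat.add_sub_cancel_left,
      Nat.add_assoc, Nat.add_sub_cancel_left]

lemma pathMass_take_mul_drop (P : S → S → ℝ) {π : MCPath S} {k : ℕ} (hk : k ≤ π.1) :
    pathMass P (take π k) * pathMass P (drop π k) = pathMass P π := by
  rw [← pathMass_append, append_take_drop hk]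
  rw [get_drop (Nat.zero_le _), take_fst, get_take le_rfl, Nat.add_zero]

end MCPath

namespace IsHitting

open MCPath

variable {S : Type} {T : Set S} {s : S} {π a b : MCPath S}

lemma get_zero (h : IsHitting T s π) : π.get 0 = s := (isHitting_iff.mp h).1

lemma get_fst_mem (h : IsHitting T s π) : π.get π.1 ∈ T := (isHitting_iff.mp h).2.1

lemma eq_fst_of_get_mem (h : IsHitting T s π) {i : ℕ} (hi : i ≤ π.1) (hT : π.get i ∈ T) :
    i = π.1 := by
  by_contra hne
  exact (isHitting_iff.mp h).2.2 i (by omega) hT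

protected lemma drop (h : IsHitting T s π) {k : ℕ} (hk : k ≤ π.1) :
    IsHitting T (π.get k) (drop π k) := by
  obtain ⟨-, hlast, hbefore⟩ := isHitting_iff.mp h
  refine isHitting_iff.mpr ⟨by rw [get_drop (Nat.zero_le _), Nat.add_zero], ?_, fun i hi => ?_⟩
  · rw [drop_fst, get_drop le_rfl, Nat.add_sub_cancel' hk]
    exact hlast
  · rw [drop_fst] at hi
    rw [get_drop hi.le]
    exact hbefore _ (by omega)

lemma append (ha₀ : a.get 0 = s) (ha : ∀ i ≤ a.1, a.get i ∉ T)
    (hb : IsHitting T (a.get a.1) b) : IsHitting T s (MCPath.append a b) := by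
  obtain ⟨hb₀, hlast, hbefore⟩ := isHitting_iff.mp hb
  refine isHitting_iff.mpr ⟨by rw [get_append_of_le (Nat.zero_le _), ha₀], ?_, fun i hi => ?_⟩
  · rw [append_fst, get_append_of_ge hb₀ (by omega) le_rfl, Nat.add_sub_cancel_left]
    exact hlast
  · rw [append_fst] at hi
    rcases le_total i a.1 with hia | hai
    · rw [get_append_of_le hia]
      exact ha i hia
    · rw [get_append_of_ge hb₀ hai hi.le]
      exact hbefore _ (by omega)

end IsHitting

namespace MCPath

variable {S : Type}

lemma isHitting_take_iff {U : Set S} {s : S} {π : MCPath S} {k : ℕ} :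
    IsHitting U s (take π k) ↔
      π.get 0 = s ∧ π.get k ∈ U ∧ ∀ i < k, π.get i ∉ U := by
  rw [isHitting_iff, take_fst, get_take (Nat.zero_le _), get_take le_rfl]
  refine and_congr_right' (and_congr_right' (forall₂_congr fun i hi => ?_))
  rw [get_take hi.le]

lemma exists_isHitting_take {U : Set S} {s : S} {π : MCPath S} (h₀ : π.get 0 = s)
    (hU : ∃ i ≤ π.1, π.get i ∈ U) : ∃ k ≤ π.1, IsHitting U s (take π k) := by
  classical
  have hfind := Nat.find_spec hU
  refine ⟨Nat.find hU, hfind.1, isHitting_take_iff.mpr ⟨h₀, hfind.2, fun i hi hiU => ?_⟩⟩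
  exact Nat.find_min hU hi ⟨by have := hfind.1; omega, hiU⟩

lemma fst_le_of_append_eq {U : Set S} {s : S} {a b a' b' : MCPath S} (ha : IsHitting U s a)
    (ha' : a'.get a'.1 ∈ U) (h : append a b = append a' b') : a.1 ≤ a'.1 := by
  by_contra! hlt
  have hmem : a.get a'.1 ∈ U := by
    rwa [← get_append_of_le (b := b) hlt.le, h, get_append_of_le le_rfl]
  exact hlt.ne (ha.eq_fst_of_get_mem hlt.le hmem)

lemma append_inj {w : S} {s s' : S} {T : Set S} {a b a' b' : MCPath S}
    (ha : IsHitting {w} s a) (hb : IsHitting T w b)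
    (ha' : IsHitting {w} s' a') (hb' : IsHitting T w b')
    (h : append a b = append a' b') : a = a' ∧ b = b' := by
  have hlen : a.1 = a'.1 :=
    (fst_le_of_append_eq ha ha'.get_fst_mem h).antisymm
      (fst_le_of_append_eq ha' ha.get_fst_mem h.symm)
  constructor
  · rw [← take_append a b, ← take_append a' b', h, hlen]
  · rw [← drop_append (hb.get_zero.trans ha.get_fst_mem.symm),
      ← drop_append (hb'.get_zero.trans ha'.get_fst_mem.symm), h, hlen]

end MCPath

section Unavoidable

open MCPath

def Unavoidable {S : Type} (P : S → S → ℝ) (T : Set S) (s w : S) : Prop :=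
  ∀ π : MCPath S, IsHitting T s π → pathMass P π ≠ 0 → ∃ i : Fin (π.1 + 1), π.2 i = w

variable {S : Type} {P : S → S → ℝ} {T : Set S} {s w : S}

/-- A positive-mass path to `w` cannot meet `T` on the way: its prefix up to the first visit
of `T` would be a positive-mass hitting path to `T` that misses `w`. -/
lemma IsHitting.get_notMem_of_unavoidable (hw : w ∉ T) (hthrough : Unavoidable P T s w)
    {a : MCPath S} (ha : IsHitting {w} s a) (hm : pathMass P a ≠ 0) :
    ∀ i ≤ a.1, a.get i ∉ T := by
  intro j hj hjT
  obtain ⟨k, hk, hkT⟩ := exists_isHitting_take ha.get_zero ⟨j, hj, hjT⟩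
  have hmk : pathMass P (take a k) ≠ 0 :=
    left_ne_zero_of_mul (by rwa [pathMass_take_mul_drop P hk])
  obtain ⟨i, hi, hiw⟩ := exists_get_eq_iff.mp (hthrough _ hkT hmk)
  rw [take_fst] at hi
  rw [get_take hi] at hiw
  have hia : i = a.1 := ha.eq_fst_of_get_mem (hi.trans hk) hiw
  have hkT' : a.get k ∈ T := (isHitting_take_iff.mp hkT).2.1
  rw [show k = i by omega, hiw] at hkT'
  exact hw hkT'

noncomputable def reachMass (P : S → S → ℝ) (T : Set S) (s : S) : ℝ≥0∞ :=
  ∑' π : {π : MCPath S // IsHitting T s π}, ENNReal.ofReal (pathMass P π.1)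

lemma reachProb_eq_toReal_reachMass (hpos : ∀ s s', 0 ≤ P s s') :
    reachProb P T s = (reachMass P T s).toReal := by
  rw [reachMass, ENNReal.tsum_toReal_eq fun _ => ENNReal.ofReal_ne_top]
  exact tsum_congr fun π => (ENNReal.toReal_ofReal (pathMass_nonneg hpos π.1)).symm

lemma support_indicator_subset_range_append (hthrough : Unavoidable P T s w) :
    support ({π | IsHitting T s π}.indicator fun π => ENNReal.ofReal (pathMass P π)) ⊆
      Set.range fun p : {a // IsHitting {w} s a} × {b // IsHitting T w b} =>
        append p.1.1 p.2.1 := by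
  intro π hπ
  obtain ⟨hH, hm⟩ := Set.indicator_apply_ne_zero.mp hπ
  have hm' : pathMass P π ≠ 0 := (ENNReal.ofReal_pos.mp (pos_iff_ne_zero.mpr hm)).ne'
  obtain ⟨k, hk, hkw⟩ :=
    exists_isHitting_take (U := {w}) hH.get_zero (exists_get_eq_iff.mp (hthrough π hH hm'))
  have hkw' : π.get k = w := (isHitting_take_iff.mp hkw).2.1
  exact ⟨(⟨take π k, hkw⟩, ⟨drop π k, hkw' ▸ hH.drop hk⟩), append_take_drop hk⟩

lemma indicator_append_eq_mul (hpos : ∀ s s', 0 ≤ P s s') (hw : w ∉ T)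
    (hthrough : Unavoidable P T s w) {a b : MCPath S} (ha : IsHitting {w} s a)
    (hb : IsHitting T w b) :
    {π | IsHitting T s π}.indicator (fun π => ENNReal.ofReal (pathMass P π)) (append a b) =
      ENNReal.ofReal (pathMass P a) * ENNReal.ofReal (pathMass P b) := by
  have haw : a.get a.1 = w := ha.get_fst_mem
  have hab : b.get 0 = a.get a.1 := hb.get_zero.trans haw.symm
  rw [← ENNReal.ofReal_mul (pathMass_nonneg hpos a), ← pathMass_append P hab]
  refine Set.indicator_apply_eq_self.mpr fun hnot => ?_
  by_contra hm
  have hm' : pathMass P a * pathMass P b ≠ 0 := by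
    rw [← pathMass_append P hab]
    exact (ENNReal.ofReal_pos.mp (pos_iff_ne_zero.mpr hm)).ne'
  exact hnot (IsHitting.append ha.get_zero
    (ha.get_notMem_of_unavoidable hw hthrough (left_ne_zero_of_mul hm')) (haw ▸ hb))

theorem reachMass_eq_mul_of_unavoidable (hpos : ∀ s s', 0 ≤ P s s') (hw : w ∉ T)
    (hthrough : Unavoidable P T s w) :
    reachMass P T s = reachMass P {w} s * reachMass P T w := by
  set m : MCPath S → ℝ≥0∞ := fun π => ENNReal.ofReal (pathMass P π)
  have hinj : Injective fun p : {a // IsHitting {w} s a} × {b // IsHitting T w b} =>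
      append p.1.1 p.2.1 := fun p q h => by
    obtain ⟨h₁, h₂⟩ := append_inj p.1.2 p.2.2 q.1.2 q.2.2 h
    exact Prod.ext (Subtype.ext h₁) (Subtype.ext h₂)
  calc reachMass P T s = ∑' π, {π | IsHitting T s π}.indicator m π :=
        _root_.tsum_subtype {π | IsHitting T s π} m
    _ = ∑' p : {a // IsHitting {w} s a} × {b // IsHitting T w b},
          {π | IsHitting T s π}.indicator m (append p.1.1 p.2.1) :=
        (hinj.tsum_eq (support_indicator_subset_range_append hthrough)).symm
    _ = ∑' p : {a // IsHitting {w} s a} × {b // IsHitting T w b}, m p.1 * m p.2 :=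
        tsum_congr fun p => indicator_append_eq_mul hpos hw hthrough p.1.2 p.2.2
    _ = reachMass P {w} s * reachMass P T w := by
        rw [ENNReal.tsum_prod', reachMass, reachMass, ← ENNReal.tsum_mul_right]
        exact tsum_congr fun a => ENNReal.tsum_mul_left (a := m a)

end Unavoidable

theorem reachProb_mul_of_unavoidable_general {n : ℕ} (ι : Fin n) (P : Fin n → Fin n → ℝ)
    (hpos : ∀ s s', 0 ≤ P s s')
    (T : Set (Fin n)) (w : Fin n) (hw : w ∉ T)
    (hthrough : ∀ π : MCPath (Fin n), IsHitting T ι π → pathMass P π ≠ 0 →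
      ∃ i : Fin (π.1 + 1), π.2 i = w) :
    reachProb P T ι = reachProb P {w} ι * reachProb P T w := by
  simp only [reachProb_eq_toReal_reachMass hpos, reachMass_eq_mul_of_unavoidable hpos hw hthrough,
    ENNReal.toReal_mul]

/-- Multiplicative decomposition of reachability at an unavoidable intermediate state:
if `w ∉ T` and every hitting path from `ι` to `T` with nonzero mass visits `w`, then
`Pr_{P,ι}(◇T) = Pr_{P,ι}(◇{w}) * Pr_{P,w}(◇T)`. -/
theorem reachProb_mul_of_unavoidable {n : ℕ} (ι : Fin n) (P : Fin n → Fin n → ℝ)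
    (hpos : ∀ s s', 0 ≤ P s s') (hrow : ∀ s, ∑ s', P s s' = 1)
    (T : Set (Fin n)) (w : Fin n) (hw : w ∉ T)
    (hthrough : ∀ π : MCPath (Fin n), IsHitting T ι π → pathMass P π ≠ 0 →
      ∃ i : Fin (π.1 + 1), π.2 i = w) :
    reachProb P T ι = reachProb P {w} ι * reachProb P T w :=
  reachProb_mul_of_unavoidable_general ι P hpos T w hw hthrough
end

section
/- For every multivariate polynomial f ∈ ℚ[X] over a finite parameter set X, there exist rationals A ≥ 0 and B > 0, a simple pMC D over X whose only cycles are self-loops at absorbing states, and a target set T, such that for every valuation val : X → [0,1], the reachability probability of the instantiated chain satisfies Pr_{D[val]}(◇T) = (f(val) + A) / B. -/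
/-- An entry of a simple pMC: a nonnegative rational constant, a variable `x`, or `1 - x`. -/
def SimpleEntry {X : Type} (p : MvPolynomial X ℚ) : Prop :=
  (∃ q : ℚ, 0 ≤ q ∧ p = MvPolynomial.C q) ∨
  (∃ x : X, p = MvPolynomial.X x) ∨
  (∃ x : X, p = 1 - MvPolynomial.X x)

/-- A simple parametric Markov chain over parameter set `X` with `n` states:
all transition polynomials are simple entries and every row sums to `1` as a polynomial. -/
structure SimplePMC (X : Type) (n : ℕ) where
  init : Fin n
  P : Fin n → Fin n → MvPolynomial X ℚ
  simple : ∀ s s', SimpleEntry (P s s')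
  rowSum : ∀ s, ∑ s', P s s' = 1

/-- A valuation is well-defined if every parameter value lies in `[0,1]`. -/
def WDVal {X : Type} (val : X → ℝ) : Prop := ∀ x, val x ∈ Set.Icc (0 : ℝ) 1

/-- A valuation is graph-preserving if every parameter value lies in `(0,1)`. -/
def GPVal {X : Type} (val : X → ℝ) : Prop := ∀ x, val x ∈ Set.Ioo (0 : ℝ) 1

/-- The transition matrix of the instantiation `D[val]`. -/
noncomputable def instP {X : Type} {n : ℕ} (D : SimplePMC X n) (val : X → ℝ) :
    Fin n → Fin n → ℝ :=
  fun s s' => MvPolynomial.aeval val (D.P s s')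

/-- The only cycles of the pMC are self-loops at absorbing states. -/
def OnlySelfLoopCycles {X : Type} {n : ℕ} (D : SimplePMC X n) : Prop :=
  ∀ (l : ℕ) (c : Fin (l + 1) → Fin n), 0 < l →
    (∀ i : Fin l, D.P (c i.castSucc) (c i.succ) ≠ 0) → c (Fin.last l) = c 0 →
    (∀ i, c i = c 0) ∧ D.P (c 0) (c 0) = 1

/-!
Write `f = ∑ c_α x^α` and `B = 1 + ∑ |c_α|`. From the initial state the chain moves with
probability `|c_α| / B` into a gadget for the monomial `α`, and with the remaining probability
`1 / B` to an absorbing failure state. The gadget for `α` tests the variables of `α` (with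
multiplicity) one after another, going on with probability `x` and leaving with probability
`1 - x`; passing all tests leads to the target if `c_α > 0` and to the failure state otherwise,
and leaving early does the opposite. Hence the gadget reaches the target with probability `x^α`
or `1 - x^α`, and the total is `(∑ c_α x^α + ∑_{c_α < 0} |c_α|) / B`.

Ranking the states by their distance to the end of their gadget, every edge except a self-loop
at an absorbing state decreases the rank. This gives acyclicity and, because hitting paths of
positive mass then have bounded length, the one-step equations for reachability probabilities.
-/

open MvPolynomial

lemma simpleEntry_zero {σ : Type} : SimpleEntry (0 : MvPolynomial σ ℚ) :=
  Or.inl ⟨0, le_rfl, C_0.symm⟩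

lemma simpleEntry_one {σ : Type} : SimpleEntry (1 : MvPolynomial σ ℚ) :=
  Or.inl ⟨1, zero_le_one, C_1.symm⟩

section Walks

variable {S : Type} {R : Type*} [Zero R]

def IsAbsorbing (M : S → S → R) (s : S) : Prop := ∀ t, M s t ≠ 0 → t = s

def IsRankedBy (M : S → S → R) (rk : S → ℕ) : Prop :=
  ∀ s, IsAbsorbing M s ∨ ∀ t, M s t ≠ 0 → rk t < rk s

def IsWalk (M : S → S → R) {l : ℕ} (c : Fin (l + 1) → S) : Prop :=
  ∀ i : Fin l, M (c i.castSucc) (c i.succ) ≠ 0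

variable {M : S → S → R} {rk : S → ℕ} {l : ℕ} {c : Fin (l + 1) → S}

lemma IsWalk.eq_of_isAbsorbing (hc : IsWalk M c) {i : Fin (l + 1)} (hi : IsAbsorbing M (c i)) :
    ∀ j, i ≤ j → c j = c i := by
  intro j
  induction j using Fin.induction with
  | zero => intro h; rw [Fin.le_zero_iff.mp h]
  | succ j ih =>
    intro hij
    rcases hij.eq_or_lt with rfl | hlt
    · rfl
    · have hj := ih (Fin.le_castSucc_iff.mpr hlt)
      exact ((hj ▸ hi) _ (hc j)).trans hj

lemma IsRankedBy.length_add_le (hM : IsRankedBy M rk) (hc : IsWalk M c)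
    (hna : ∀ i : Fin l, ¬IsAbsorbing M (c i.castSucc)) :
    l + rk (c (Fin.last l)) ≤ rk (c 0) := by
  suffices ∀ j : Fin (l + 1), j.val + rk (c j) ≤ rk (c 0) by simpa using this (Fin.last l)
  intro j
  induction j using Fin.induction with
  | zero => simp
  | succ j ih =>
    have := (hM _).resolve_left (hna j) _ (hc j)
    simp only [Fin.val_succ, Fin.val_castSucc] at ih ⊢
    omega

lemma IsRankedBy.eq_of_isWalk_of_last_eq (hM : IsRankedBy M rk) (hc : IsWalk M c) (hl : 0 < l)
    (hcl : c (Fin.last l) = c 0) : IsAbsorbing M (c 0) ∧ ∀ i, c i = c 0 := by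
  by_cases h : ∃ i : Fin l, IsAbsorbing M (c i.castSucc)
  · obtain ⟨i, hi⟩ := h
    have h0 : IsAbsorbing M (c 0) := by
      rwa [← hcl, hc.eq_of_isAbsorbing hi _ (Fin.le_last _)]
    exact ⟨h0, fun j => hc.eq_of_isAbsorbing h0 j (Fin.zero_le _)⟩
  · have := hM.length_add_le hc (not_exists.mp h)
    rw [hcl] at this
    omega

lemma IsRankedBy.mono {R' : Type*} [Zero R'] {M' : S → S → R'} (hM : IsRankedBy M rk)
    (h : ∀ s t, M' s t ≠ 0 → M s t ≠ 0) : IsRankedBy M' rk := fun s =>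
  (hM s).imp (fun hs t ht => hs t (h s t ht)) (fun hs t ht => hs t (h s t ht))

lemma IsRankedBy.comp_equiv {S' : Type} (hM : IsRankedBy M rk) (e : S' ≃ S) :
    IsRankedBy (fun a b => M (e a) (e b)) (rk ∘ e) := fun a =>
  (hM (e a)).imp (fun ha _ hb => e.injective (ha _ hb)) (fun ha _ hb => ha _ hb)

end Walks

lemma IsAbsorbing.sum_eq {S : Type} {R : Type*} [AddCommMonoid R] [Fintype S] {M : S → S → R}
    {s : S} (hs : IsAbsorbing M s) : ∑ t, M s t = M s s :=
  Finset.sum_eq_single s (fun t _ ht => not_not.mp (mt (hs t) ht)) (by simp)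

section Paths

variable {S : Type} {P : S → S → ℝ} {T : Set S} {s : S}

def MCPath.cons (s : S) (π : MCPath S) : MCPath S := ⟨π.1 + 1, Fin.cons s π.2⟩

lemma MCPath.cons_injective (s : S) : Function.Injective (MCPath.cons s) := by
  rintro ⟨m, g⟩ ⟨m', g'⟩ h
  simp only [MCPath.cons, Sigma.mk.injEq, Nat.add_right_cancel_iff] at h
  obtain ⟨rfl, hg⟩ := h
  obtain rfl := Fin.cons_right_injective (α := fun _ => S) s (eq_of_heq hg)
  rfl

lemma pathMass_cons_s8 (P : S → S → ℝ) (s : S) (π : MCPath S) :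
    pathMass P (MCPath.cons s π) = P s (π.2 0) * pathMass P π := by
  rw [pathMass, pathMass, MCPath.cons, Fin.prod_univ_succ]
  simp [Fin.castSucc_succ]

lemma pathMass_ne_zero_iff {π : MCPath S} : pathMass P π ≠ 0 ↔ IsWalk P π.2 := by
  simp [pathMass, IsWalk, Finset.prod_ne_zero_iff]

lemma IsHitting.cons {t : S} {π : MCPath S} (hs : s ∉ T) (h : IsHitting T t π) :
    IsHitting T s (MCPath.cons s π) := by
  obtain ⟨-, hlast, hmid⟩ := h
  refine ⟨rfl, by simpa [MCPath.cons, ← Fin.succ_last] using hlast, fun i => ?_⟩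
  induction i using Fin.cases with
  | zero => simpa [MCPath.cons] using hs
  | succ j => simpa [MCPath.cons, ← Fin.succ_castSucc] using hmid j

lemma IsHitting.exists_eq_cons {π : MCPath S} (hs : s ∉ T) (h : IsHitting T s π) :
    ∃ t π', IsHitting T t π' ∧ π = MCPath.cons s π' := by
  obtain ⟨_ | k, g⟩ := π
  · exact absurd (h.1 ▸ h.2.1) hs
  · obtain ⟨h0, hlast, hmid⟩ := h
    refine ⟨_, ⟨k, Fin.tail g⟩, ⟨rfl, ?_, fun i => ?_⟩, ?_⟩
    · show g (Fin.last k).succ ∈ T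
      rwa [Fin.succ_last]
    · show g i.castSucc.succ ∉ T
      rw [Fin.succ_castSucc]
      exact hmid i.succ
    · rw [MCPath.cons, ← h0, Fin.cons_self_tail]

noncomputable def hittingConsEquiv (hs : s ∉ T) :
    (Σ t, {π : MCPath S // IsHitting T t π}) ≃ {π : MCPath S // IsHitting T s π} :=
  Equiv.ofBijective (fun x => ⟨MCPath.cons s x.2.1, x.2.2.cons hs⟩) <| by
    constructor
    · rintro ⟨t, π, hπ⟩ ⟨t', π', hπ'⟩ h
      obtain rfl : π = π' := MCPath.cons_injective s (congrArg Subtype.val h)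
      obtain rfl : t = t' := hπ.1.symm.trans hπ'.1
      rfl
    · rintro ⟨π, hπ⟩
      obtain ⟨t, π', hπ', rfl⟩ := hπ.exists_eq_cons hs
      exact ⟨⟨t, π', hπ'⟩, rfl⟩

lemma pathMass_hittingConsEquiv (hs : s ∉ T) (x : Σ t, {π : MCPath S // IsHitting T t π}) :
    pathMass P (hittingConsEquiv hs x).1 = P s x.1 * pathMass P x.2.1 := by
  obtain ⟨t, π, rfl, -⟩ := x
  exact pathMass_cons_s8 P s π

variable {rk : S → ℕ}

lemma IsRankedBy.length_le_of_isHitting (hP : IsRankedBy P rk) {π : MCPath S}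
    (h : IsHitting T s π) (hπ : pathMass P π ≠ 0) : π.1 ≤ rk s := by
  obtain ⟨m, g⟩ := π
  obtain ⟨h0, hlast, hmid⟩ := h
  dsimp only at h0 hlast hmid
  have hw : IsWalk P g := pathMass_ne_zero_iff.mp hπ
  have := hP.length_add_le hw fun i hi =>
    hmid i (hw.eq_of_isAbsorbing hi _ (Fin.le_last _) ▸ hlast)
  subst h0
  exact le_of_add_le_left this

lemma IsRankedBy.finite_support_pathMass [Finite S] (hP : IsRankedBy P rk) (T : Set S) (s : S) :
    (Function.support fun π : {π : MCPath S // IsHitting T s π} => pathMass P π.1).Finite := by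
  have hfin : {π : MCPath S | π.1 ≤ rk s}.Finite :=
    ((Set.finite_Iic (rk s)).biUnion fun m _ => Set.finite_range (Sigma.mk m)).subset
      fun π hπ => Set.mem_biUnion hπ ⟨π.2, rfl⟩
  exact (hfin.preimage Subtype.val_injective.injOn).subset
    fun π hπ => hP.length_le_of_isHitting π.2 hπ

lemma reachProb_of_mem (P : S → S → ℝ) (hs : s ∈ T) : reachProb P T s = 1 := by
  have huniq : ∀ π : {π : MCPath S // IsHitting T s π}, π.1 = ⟨0, fun _ => s⟩ := by
    rintro ⟨⟨_ | m, g⟩, h0, -, hmid⟩ <;> dsimp only at h0 hmid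
    · simp only [Sigma.mk.injEq, heq_eq_eq, true_and]
      funext i
      rw [Fin.eq_zero i, h0]
    · exact (hmid 0 (by simpa [h0] using hs)).elim
  rw [reachProb, tsum_eq_single ⟨_, rfl, hs, fun i => i.elim0⟩
    fun π hπ => absurd (Subtype.ext (huniq π)) hπ]
  simp [pathMass]

lemma reachProb_eq_zero_of_isAbsorbing (hs : s ∉ T) (habs : IsAbsorbing P s) :
    reachProb P T s = 0 := by
  refine (tsum_congr fun π => ?_).trans tsum_zero
  obtain ⟨⟨m, g⟩, h0, hlast, -⟩ := π
  dsimp only at h0 hlast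
  subst h0
  by_contra hπ
  have hw : IsWalk P g := pathMass_ne_zero_iff.mp hπ
  exact hs (hw.eq_of_isAbsorbing habs _ (Fin.zero_le _) ▸ hlast)

theorem IsRankedBy.reachProb_eq_sum [Fintype S] (hP : IsRankedBy P rk) (hs : s ∉ T) :
    reachProb P T s = ∑ t, P s t * reachProb P T t := by
  have hsum : Summable fun x : Σ t, {π : MCPath S // IsHitting T t π} =>
      P s x.1 * pathMass P x.2.1 :=
    ((hittingConsEquiv hs).summable_iff.mpr
      (summable_of_hasFiniteSupport (hP.finite_support_pathMass T s))).congr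
      (pathMass_hittingConsEquiv hs)
  calc reachProb P T s
      = ∑' x : Σ t, {π : MCPath S // IsHitting T t π}, P s x.1 * pathMass P x.2.1 := by
        rw [reachProb, ← (hittingConsEquiv hs).tsum_eq]
        exact tsum_congr (pathMass_hittingConsEquiv hs)
    _ = ∑ t, P s t * reachProb P T t := by
        rw [hsum.tsum_sigma, tsum_fintype]
        simp_rw [tsum_mul_left, reachProb]

lemma reachProb_comp_equiv {S' : Type} (e : S ≃ S') (P : S → S → ℝ) (T : Set S) (s : S) :
    reachProb (fun a b => P (e.symm a) (e.symm b)) (e.symm ⁻¹' T) (e s) = reachProb P T s := by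
  let E : MCPath S ≃ MCPath S' :=
    ⟨fun π => ⟨π.1, e ∘ π.2⟩, fun π => ⟨π.1, e.symm ∘ π.2⟩,
      fun π => by simp [Function.comp_def], fun π => by simp [Function.comp_def]⟩
  refine ((E.subtypeEquiv fun π => ?_).tsum_eq _).symm.trans (tsum_congr fun π => ?_)
  · simp [E, IsHitting]
  · show pathMass _ ⟨π.1.1, e ∘ π.1.2⟩ = pathMass P π.1
    simp [pathMass]

end Paths

namespace SimplePMC

variable {σ S : Type} {n : ℕ}

theorem onlySelfLoopCycles_of_isRankedBy (D : SimplePMC σ n) {rk : Fin n → ℕ}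
    (hD : IsRankedBy D.P rk) : OnlySelfLoopCycles D := by
  intro l c hl hc hcl
  obtain ⟨h0, hconst⟩ := hD.eq_of_isWalk_of_last_eq hc hl hcl
  exact ⟨hconst, h0.sum_eq ▸ D.rowSum _⟩

variable [Fintype S]

noncomputable def ofEquiv (e : S ≃ Fin n) (s₀ : S) (Q : S → S → MvPolynomial σ ℚ)
    (hQ : ∀ s t, SimpleEntry (Q s t)) (hrow : ∀ s, ∑ t, Q s t = 1) : SimplePMC σ n where
  init := e s₀
  P i j := Q (e.symm i) (e.symm j)
  simple _ _ := hQ _ _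
  rowSum i := (e.symm.sum_comp (Q (e.symm i))).trans (hrow _)

variable {e : S ≃ Fin n} {s₀ : S} {Q : S → S → MvPolynomial σ ℚ}
  {hQ : ∀ s t, SimpleEntry (Q s t)} {hrow : ∀ s, ∑ t, Q s t = 1}

lemma onlySelfLoopCycles_ofEquiv {rk : S → ℕ} (hrk : IsRankedBy Q rk) :
    OnlySelfLoopCycles (ofEquiv e s₀ Q hQ hrow) :=
  onlySelfLoopCycles_of_isRankedBy _ (hrk.comp_equiv e.symm)

lemma reachProb_instP_ofEquiv (val : σ → ℝ) (T : Set S) :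
    reachProb (instP (ofEquiv e s₀ Q hQ hrow) val) (e.symm ⁻¹' T)
        (ofEquiv e s₀ Q hQ hrow).init =
      reachProb (fun s t => aeval val (Q s t)) T s₀ :=
  reachProb_comp_equiv e (fun s t => aeval val (Q s t)) T s₀

end SimplePMC

lemma abs_mul_ite_pos_eq_mul_add_negPart (q : ℚ) (p : ℝ) :
    |(q : ℝ)| * (if 0 < q then p else 1 - p) = q * p + (q⁻ : ℚ) := by
  by_cases hq : 0 < q
  · rw [if_pos hq, abs_of_pos (by exact_mod_cast hq), negPart_eq_zero.mpr hq.le, Rat.cast_zero,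
      add_zero]
  · rw [if_neg hq, abs_of_nonpos (by exact_mod_cast not_lt.mp hq),
      negPart_eq_neg.mpr (not_lt.mp hq), Rat.cast_neg]
    ring

namespace SolutionPMC

variable {σ : Type}

noncomputable def monomialVars (α : σ →₀ ℕ) : List σ := α.toMultiset.toList

lemma prod_map_monomialVars (val : σ → ℝ) (α : σ →₀ ℕ) :
    ((monomialVars α).map val).prod = α.prod fun x k => val x ^ k := by
  rw [monomialVars, ← Multiset.prod_coe, ← Multiset.map_coe, Multiset.coe_toList,
    Finsupp.toMultiset_map, Finsupp.prod_toMultiset,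
    Finsupp.prod_mapDomain_index (fun _ => pow_zero _) (fun _ _ _ => pow_add _ _ _)]

lemma length_monomialVars_le {f : MvPolynomial σ ℚ} {α : σ →₀ ℕ} (hα : α ∈ f.support) :
    (monomialVars α).length ≤ f.totalDegree := by
  rw [monomialVars, Multiset.length_toList, Finsupp.card_toMultiset]
  exact le_totalDegree hα

lemma aeval_eq_sum_coeff_mul_prod (f : MvPolynomial σ ℚ) (val : σ → ℝ) :
    aeval val f = ∑ α ∈ f.support, ((f.coeff α : ℚ) : ℝ) * ((monomialVars α).map val).prod := by
  conv_lhs => rw [f.as_sum, map_sum]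
  simp [aeval_monomial, prod_map_monomialVars]

variable (f : MvPolynomial σ ℚ)

/-- `none` is the initial state, `some (.inl b)` an absorbing state (the target iff `b`), and
`some (.inr (α, i))` the `i`-th state of the gadget for the monomial `α`. -/
abbrev State := Option (Bool ⊕ f.support × Fin (f.totalDegree + 1))

noncomputable def scale : ℚ := 1 + ∑ α ∈ f.support, |f.coeff α|

noncomputable def shift : ℚ := ∑ α ∈ f.support, (f.coeff α)⁻

lemma scale_pos : 0 < scale f := by
  have := Finset.sum_nonneg fun α (_ : α ∈ f.support) => abs_nonneg (f.coeff α)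
  unfold scale
  linarith

lemma shift_nonneg : 0 ≤ shift f := Finset.sum_nonneg fun _ _ => negPart_nonneg _

def coeffPos (a : f.support) : Bool := decide (0 < f.coeff a)

noncomputable def initWeight : State f → ℚ
  | some (.inl false) => 1 / scale f
  | some (.inr (a, i)) => if i = 0 then |f.coeff a| / scale f else 0
  | _ => 0

lemma initWeight_nonneg : ∀ t, 0 ≤ initWeight f t
  | none | some (.inl true) => le_rfl
  | some (.inl false) => div_nonneg zero_le_one (scale_pos f).le
  | some (.inr (a, i)) => by
    simp only [initWeight]
    split_ifs
    exacts [div_nonneg (abs_nonneg _) (scale_pos f).le, le_rfl]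

lemma sum_initWeight_mul {K : Type*} [DivisionRing K] [CharZero K] (g : State f → K) :
    ∑ t, (initWeight f t : K) * g t =
      (1 / scale f : ℚ) * g (some (.inl false)) +
        ∑ a : f.support, (|f.coeff a| / scale f : ℚ) * g (some (.inr (a, 0))) := by
  simp [initWeight, Fintype.sum_option, Fintype.sum_sum_type, Fintype.sum_prod_type,
    apply_ite Rat.cast, ite_mul]

lemma sum_initWeight : ∑ t, initWeight f t = 1 := by
  have := sum_initWeight_mul f (K := ℚ) fun _ => 1
  simp only [Rat.cast_id, mul_one] at this
  rw [this, Finset.sum_coe_sort f.support fun α => |f.coeff α| / scale f, ← Finset.sum_div,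
    ← add_div, div_eq_one_iff_eq (scale_pos f).ne', scale]

lemma val_add_one_of_getElem?_eq_some {a : f.support} {i : Fin (f.totalDegree + 1)} {x : σ}
    (h : (monomialVars a.1)[i.1]? = some x) : (i + 1).val = i.val + 1 := by
  obtain ⟨hi, -⟩ := List.getElem?_eq_some_iff.mp h
  exact Fin.val_add_one_of_lt (Fin.lt_last_iff_ne_last.mpr fun hl =>
    absurd (hi.trans_le (length_monomialVars_le a.2)) (by simp [hl]))

variable [DecidableEq σ]

noncomputable def trans : State f → State f → MvPolynomial σ ℚ
  | none, t => C (initWeight f t)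
  | some (.inl b), t => if t = some (.inl b) then 1 else 0
  | some (.inr (a, i)), t =>
    match (monomialVars a.1)[i.1]? with
    -- `i + 1` wraps around in `Fin`, but only at `i = totalDegree`, where there is no variable left
    | some x => (if t = some (.inr (a, i + 1)) then X x else 0) +
        (if t = some (.inl !coeffPos f a) then 1 - X x else 0)
    | none => if t = some (.inl (coeffPos f a)) then 1 else 0

def rank : State f → ℕ
  | none => f.totalDegree + 2
  | some (.inl _) => 0
  | some (.inr (_, i)) => f.totalDegree + 1 - i

lemma trans_none (t : State f) : trans f none t = C (initWeight f t) := rfl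

lemma trans_terminal (b : Bool) (t : State f) :
    trans f (some (.inl b)) t = if t = some (.inl b) then 1 else 0 := rfl

lemma trans_cell_of_getElem?_eq_some {a : f.support} {i : Fin (f.totalDegree + 1)} {x : σ}
    (h : (monomialVars a.1)[i.1]? = some x) (t : State f) :
    trans f (some (.inr (a, i))) t = (if t = some (.inr (a, i + 1)) then X x else 0) +
      (if t = some (.inl !coeffPos f a) then 1 - X x else 0) := by
  simp only [trans, h]

lemma trans_cell_of_getElem?_eq_none {a : f.support} {i : Fin (f.totalDegree + 1)}
    (h : (monomialVars a.1)[i.1]? = none) (t : State f) :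
    trans f (some (.inr (a, i))) t = if t = some (.inl (coeffPos f a)) then 1 else 0 := by
  simp only [trans, h]

lemma trans_simple : ∀ s t, SimpleEntry (trans f s t)
  | none, t => Or.inl ⟨_, initWeight_nonneg f t, rfl⟩
  | some (.inl b), t => by
    rw [trans_terminal]
    split_ifs
    exacts [simpleEntry_one, simpleEntry_zero]
  | some (.inr (a, i)), t => by
    cases h : (monomialVars a.1)[i.1]? with
    | none =>
      rw [trans_cell_of_getElem?_eq_none f h]
      split_ifs
      exacts [simpleEntry_one, simpleEntry_zero]
    | some x =>
      rw [trans_cell_of_getElem?_eq_some f h]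
      by_cases h₁ : t = some (.inr (a, i + 1))
      · simp [h₁, SimpleEntry]
      · by_cases h₂ : t = some (.inl !coeffPos f a)
        · simp [h₂, SimpleEntry]
        · simp [h₁, h₂, simpleEntry_zero]

lemma trans_rowSum : ∀ s, ∑ t, trans f s t = 1
  | none => by simp only [trans_none, ← map_sum, sum_initWeight, C_1]
  | some (.inl b) => by simp [trans_terminal]
  | some (.inr (a, i)) => by
    cases h : (monomialVars a.1)[i.1]? with
    | none => simp [trans_cell_of_getElem?_eq_none f h]
    | some x => simp [trans_cell_of_getElem?_eq_some f h, Finset.sum_add_distrib]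

lemma isRankedBy_trans : IsRankedBy (trans f) (rank f) := by
  rintro (_ | b | ⟨a, i⟩)
  · refine Or.inr fun t ht => ?_
    rcases t with _ | b | ⟨a', i'⟩
    · simp [trans_none, initWeight] at ht
    · simp [rank]
    · simp only [rank]
      omega
  · refine Or.inl fun t ht => ?_
    by_contra h
    simp [trans_terminal, h] at ht
  · refine Or.inr fun t ht => ?_
    have hi : i.1 ≤ f.totalDegree := Nat.lt_succ_iff.mp i.2
    cases h : (monomialVars a.1)[i.1]? with
    | none =>
      rw [trans_cell_of_getElem?_eq_none f h] at ht
      obtain rfl : t = some (.inl (coeffPos f a)) := by by_contra h'; simp [h'] at ht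
      simp only [rank]
      omega
    | some x =>
      rw [trans_cell_of_getElem?_eq_some f h] at ht
      by_cases h₁ : t = some (.inr (a, i + 1))
      · subst h₁
        simp only [rank, val_add_one_of_getElem?_eq_some f h]
        omega
      · by_cases h₂ : t = some (.inl !coeffPos f a)
        · subst h₂
          simp only [rank]
          omega
        · simp [h₁, h₂] at ht

variable (val : σ → ℝ)

noncomputable def reach (s : State f) : ℝ :=
  reachProb (fun s t => aeval val (trans f s t)) {some (.inl true)} s

lemma reach_eq_sum {s : State f} (hs : s ≠ some (.inl true)) :
    reach f val s = ∑ t, aeval val (trans f s t) * reach f val t :=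
  ((isRankedBy_trans f).mono fun s t h h₀ => h (by rw [h₀, map_zero])).reachProb_eq_sum hs

lemma reach_terminal (b : Bool) : reach f val (some (.inl b)) = if b then 1 else 0 := by
  cases b
  · refine reachProb_eq_zero_of_isAbsorbing (by simp) fun t ht => ?_
    by_contra h
    simp [trans_terminal, h] at ht
  · exact reachProb_of_mem _ rfl

lemma reach_cell (a : f.support) (i : Fin (f.totalDegree + 1)) :
    reach f val (some (.inr (a, i))) =
      (((monomialVars a.1).drop i).map val).prod * reach f val (some (.inl (coeffPos f a))) +
        (1 - (((monomialVars a.1).drop i).map val).prod) *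
          reach f val (some (.inl !coeffPos f a)) := by
  rw [reach_eq_sum f val (by simp)]
  cases h : (monomialVars a.1)[i.1]? with
  | none =>
    simp [trans_cell_of_getElem?_eq_none f h,
      List.drop_eq_nil_of_le (List.getElem?_eq_none_iff.mp h)]
  | some x =>
    obtain ⟨hi, rfl⟩ := List.getElem?_eq_some_iff.mp h
    have hsucc := val_add_one_of_getElem?_eq_some f h
    have ih := reach_cell a (i + 1)
    rw [hsucc] at ih
    simp only [trans_cell_of_getElem?_eq_some f h, map_add, apply_ite (aeval val), map_zero,
      add_mul, ite_mul, zero_mul, Finset.sum_add_distrib, Finset.sum_ite_eq', Finset.mem_univ,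
      if_true, aeval_X, map_sub, map_one]
    rw [ih, List.drop_eq_getElem_cons hi, List.map_cons, List.prod_cons]
    ring
termination_by (monomialVars a.1).length - i
decreasing_by omega

lemma reach_gadget (a : f.support) :
    reach f val (some (.inr (a, 0))) =
      if 0 < f.coeff a then ((monomialVars a.1).map val).prod
      else 1 - ((monomialVars a.1).map val).prod := by
  rw [reach_cell, reach_terminal, reach_terminal]
  by_cases hc : 0 < f.coeff a <;> simp [coeffPos, hc]

lemma reach_init : reach f val none = (aeval val f + shift f) / scale f := by
  rw [reach_eq_sum f val (by simp)]
  simp only [trans_none, aeval_C, eq_ratCast]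
  rw [sum_initWeight_mul, reach_terminal, aeval_eq_sum_coeff_mul_prod, shift,
    ← Finset.sum_coe_sort f.support, ← Finset.sum_coe_sort f.support]
  push_cast
  rw [mul_zero, zero_add, ← Finset.sum_add_distrib, Finset.sum_div]
  refine Finset.sum_congr rfl fun a _ => ?_
  rw [div_mul_eq_mul_div, reach_gadget, abs_mul_ite_pos_eq_mul_add_negPart]

end SolutionPMC

theorem exists_pmc_solution_function_general {X : Type} (f : MvPolynomial X ℚ) :
    ∃ (A B : ℚ), 0 ≤ A ∧ 0 < B ∧
      ∃ (n : ℕ) (D : SimplePMC X n) (T : Set (Fin n)),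
        OnlySelfLoopCycles D ∧
        ∀ val : X → ℝ, WDVal val →
          reachProb (instP D val) T D.init = (MvPolynomial.aeval val f + (A : ℝ)) / (B : ℝ) := by
  classical
  open SolutionPMC in
  refine ⟨shift f, scale f, shift_nonneg f, scale_pos f, _,
    .ofEquiv (Fintype.equivFin _) none (trans f) (trans_simple f) (trans_rowSum f),
    (Fintype.equivFin _).symm ⁻¹' {some (.inl true)},
    SimplePMC.onlySelfLoopCycles_ofEquiv (isRankedBy_trans f), fun val _ => ?_⟩
  rw [SimplePMC.reachProb_instP_ofEquiv]
  exact SolutionPMC.reach_init f val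

/-- Proposition 8 of the paper (after Chonev): for every `f ∈ ℚ[X]` there are rationals
`A ≥ 0`, `B > 0` and a simple pMC `D` (whose only cycles are self-loops at absorbing states)
with target set `T` such that `Pr_{D[val]}(◇T) = (f(val) + A) / B` for every well-defined
valuation `val : X → [0,1]`. -/
theorem exists_pmc_solution_function {X : Type} [Fintype X] (f : MvPolynomial X ℚ) :
    ∃ (A B : ℚ), 0 ≤ A ∧ 0 < B ∧
      ∃ (n : ℕ) (D : SimplePMC X n) (T : Set (Fin n)),
        OnlySelfLoopCycles D ∧
        ∀ val : X → ℝ, WDVal val →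
          reachProb (instP D val) T D.init = (MvPolynomial.aeval val f + (A : ℝ)) / (B : ℝ) :=
  exists_pmc_solution_function_general f
end

section
/- For every simple pMC D over a finite parameter set X with n states and target set T, there exists a simple pMC D' over X with n + 2·|X| states and the same target set T such that: for every graph-preserving valuation val : X → (0,1), Pr_{D'[val]}(◇T) = Pr_{D[val]}(◇T), and for every well-defined valuation val : X → [0,1] that is not graph-preserving (i.e., val x ∈ {0,1} for some x ∈ X), Pr_{D'[val]}(◇T) = 0. -/
open scoped ENNReal

section Hitting
variable {S : Type} {T : Set S}

theorem isHitting_zero_iff {s : S} {f : Fin 1 → S} :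
    IsHitting T s ⟨0, f⟩ ↔ f 0 = s ∧ s ∈ T := by
  simp only [IsHitting, Fin.last_zero, IsEmpty.forall_iff, and_true]
  exact ⟨fun ⟨h, hT⟩ => ⟨h, h ▸ hT⟩, fun ⟨h, hT⟩ => ⟨h, h ▸ hT⟩⟩

theorem isHitting_cons_iff {m : ℕ} {s a : S} {f : Fin (m + 1) → S} :
    IsHitting T s ⟨m + 1, Fin.cons a f⟩ ↔
      a = s ∧ s ∉ T ∧ IsHitting T (f 0) ⟨m, f⟩ := by
  simp only [IsHitting, Fin.forall_fin_succ, Fin.cons_zero, Fin.castSucc_zero, ← Fin.succ_last,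
    Fin.cons_succ, ← Fin.succ_castSucc, true_and]
  constructor
  · rintro ⟨rfl, hl, ha, hf⟩
    exact ⟨rfl, ha, hl, hf⟩
  · rintro ⟨rfl, ha, hl, hf⟩
    exact ⟨rfl, hl, ha, hf⟩

end Hitting

section FirstHit
variable {S : Type} [Fintype S] (P : S → S → ℝ≥0∞) (T : Set S)

noncomputable def firstHit : ℕ → S → ℝ≥0∞
  | 0 => T.indicator 1
  | m + 1 => Tᶜ.indicator fun s => ∑ t, P s t * firstHit m t

noncomputable def ereachProb (s : S) : ℝ≥0∞ :=
  ∑' m, firstHit P T m s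

variable {P T}

theorem sum_hitting_prod_eq_firstHit (m : ℕ) (s : S) :
    ∑ f : Fin (m + 1) → S, {f | IsHitting T s ⟨m, f⟩}.indicator
      (fun f => ∏ i : Fin m, P (f i.castSucc) (f i.succ)) f = firstHit P T m s := by
  classical
  induction m generalizing s with
  | zero =>
    rw [← (Equiv.funUnique (Fin 1) S).symm.sum_comp,
      Fintype.sum_eq_single s fun a ha => by simp [isHitting_zero_iff, ha]]
    simp [Set.indicator_apply, isHitting_zero_iff, firstHit]
  | succ m ih =>
    have hcons (a : S) (f : Fin (m + 1) → S) :
        {f | IsHitting T s ⟨m + 1, f⟩}.indicator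
          (fun f => ∏ i : Fin (m + 1), P (f i.castSucc) (f i.succ)) (Fin.cons a f) =
        if a = s ∧ s ∉ T ∧ IsHitting T (f 0) ⟨m, f⟩ then
          P a (f 0) * ∏ i : Fin m, P (f i.castSucc) (f i.succ) else 0 := by
      simp only [Set.indicator_apply, Set.mem_ofPred_eq, isHitting_cons_iff, Fin.prod_univ_succ,
        Fin.cons_zero, Fin.cons_succ, Fin.castSucc_zero, ← Fin.succ_castSucc]
    rw [← (Fin.consEquiv fun _ => S).sum_comp, Fintype.sum_prod_type,
      Finset.sum_eq_single s (fun a _ ha => by simp [Fin.consEquiv, hcons, ha]) (by simp)]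
    simp only [Fin.consEquiv, Equiv.coe_fn_mk, hcons, true_and, firstHit, Set.indicator_apply,
      Set.mem_compl_iff]
    by_cases hs : s ∈ T
    · simp [hs]
    simp only [hs, not_false_eq_true, true_and, if_true, ← ih, Set.indicator_apply,
      Set.mem_ofPred_eq, Finset.mul_sum]
    rw [Finset.sum_comm]
    refine Finset.sum_congr rfl fun f _ => ?_
    -- a hitting path `f` can only start at `f 0`
    rw [Finset.sum_eq_single (f 0) (fun t _ ht => ?_) (by simp)]
    · split_ifs <;> simp
    · rw [if_neg fun h => ht h.1.symm, mul_zero]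

theorem reachProb_eq_toReal_ereachProb {P : S → S → ℝ} (hP : ∀ a b, 0 ≤ P a b) (s : S) :
    reachProb P T s = (ereachProb (fun a b => ENNReal.ofReal (P a b)) T s).toReal := by
  have hmass (π : MCPath S) :
      ENNReal.ofReal (pathMass P π) =
        ∏ i : Fin π.1, ENNReal.ofReal (P (π.2 i.castSucc) (π.2 i.succ)) :=
    ENNReal.ofReal_prod_of_nonneg fun _ _ => hP _ _
  have hnonneg (π : MCPath S) : 0 ≤ pathMass P π := Finset.prod_nonneg fun _ _ => hP _ _
  rw [reachProb, ereachProb, ← tsum_congr fun π => ENNReal.toReal_ofReal (hnonneg _),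
    ← ENNReal.tsum_toReal_eq fun _ => ENNReal.ofReal_ne_top]
  refine congrArg ENNReal.toReal <|
    (tsum_subtype {π | IsHitting T s π} fun π => ENNReal.ofReal (pathMass P π)).trans ?_
  simp only [ENNReal.tsum_sigma', tsum_fintype, hmass, ← sum_hitting_prod_eq_firstHit]
  rfl

variable (T) in
theorem sum_range_firstHit_le_one (hP : ∀ s, ∑ t, P s t ≤ 1) (N : ℕ) (s : S) :
    ∑ m ∈ Finset.range N, firstHit P T m s ≤ 1 := by
  induction N generalizing s with
  | zero => simp
  | succ N ih =>
    rw [Finset.sum_range_succ']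
    by_cases hs : s ∈ T
    · simp [firstHit, hs]
    calc ∑ m ∈ Finset.range N, firstHit P T (m + 1) s + firstHit P T 0 s
        = ∑ t, P s t * ∑ m ∈ Finset.range N, firstHit P T m t := by
          simp only [firstHit, Set.indicator_of_mem (Set.mem_compl hs),
            Set.indicator_of_notMem hs, add_zero, Finset.mul_sum]
          exact Finset.sum_comm
      _ ≤ ∑ t, P s t * 1 := by gcongr with t; exact ih t
      _ ≤ 1 := by simpa using hP s

theorem ereachProb_le_one (hP : ∀ s, ∑ t, P s t ≤ 1) (s : S) : ereachProb P T s ≤ 1 :=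
  ENNReal.tsum_le_of_sum_range_le fun N => sum_range_firstHit_le_one T hP N s

theorem ereachProb_eq_of_loop (hP : ∀ s, ∑ t, P s t ≤ 1) {s t : S} (hs : s ∉ T)
    (hout : ∀ u, u ≠ s → u ≠ t → P s u = 0) (hsum : P s s + P s t = 1)
    (ht : P s t ≠ 0) :
    ereachProb P T s = ereachProb P T t := by
  rcases eq_or_ne s t with rfl | hst
  · rfl
  have hstep (m : ℕ) :
      firstHit P T (m + 1) s = P s s * firstHit P T m s + P s t * firstHit P T m t := by
    rw [firstHit, Set.indicator_of_mem (Set.mem_compl hs),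
      Fintype.sum_eq_add s t hst fun u hu => by rw [hout u hu.1 hu.2, zero_mul]]
  have h0 : firstHit P T 0 s = 0 := Set.indicator_of_notMem hs _
  have hfix : ereachProb P T s = P s s * ereachProb P T s + P s t * ereachProb P T t :=
    calc ereachProb P T s = ∑' m, firstHit P T (m + 1) s := by
          rw [ereachProb, tsum_eq_zero_add' ENNReal.summable, h0, zero_add]
      _ = _ := by simp only [hstep, ENNReal.tsum_add, ENNReal.tsum_mul_left, ereachProb]
  have hfin : P s s * ereachProb P T s ≠ ⊤ :=
    ENNReal.mul_ne_top (ne_top_of_le_ne_top ENNReal.one_ne_top (hsum ▸ le_self_add))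
      (ne_top_of_le_ne_top ENNReal.one_ne_top (ereachProb_le_one hP s))
  have hfin' : P s t ≠ ⊤ := ne_top_of_le_ne_top ENNReal.one_ne_top (hsum ▸ le_add_self)
  refine (ENNReal.mul_right_inj ht hfin').1 <| (ENNReal.add_right_inj hfin).1 ?_
  rw [← hfix, ← add_mul, hsum, one_mul]

theorem ereachProb_eq_zero_of_closed {A : Set S} (hAT : Disjoint A T)
    (hA : ∀ a ∈ A, ∀ u ∉ A, P a u = 0) {s : S} (hs : s ∈ A) : ereachProb P T s = 0 := by
  have hzero (m : ℕ) : ∀ a ∈ A, firstHit P T m a = 0 := by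
    induction m with
    | zero => exact fun a ha => Set.indicator_of_notMem (hAT.notMem_of_mem_left ha) _
    | succ m ih =>
      refine fun a ha => Set.indicator_apply_eq_zero.2 fun _ => Finset.sum_eq_zero fun u _ => ?_
      by_cases hu : u ∈ A
      · rw [ih u hu, mul_zero]
      · rw [hA a ha u hu, zero_mul]
  exact ENNReal.tsum_eq_zero.2 fun m => hzero m s hs

theorem firstHit_map {S' : Type} [Fintype S'] {P' : S' → S' → ℝ≥0∞} {φ : S → S'}
    (hφ : Function.Injective φ) (hP : ∀ a b, P' (φ a) (φ b) = P a b)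
    (hout : ∀ a u, u ∉ Set.range φ → P' (φ a) u = 0) (m : ℕ) (s : S) :
    firstHit P' (φ '' T) m (φ s) = firstHit P T m s := by
  induction m generalizing s with
  | zero => exact Set.indicator_image hφ
  | succ m ih =>
    have hsum : ∑ u, P' (φ s) u * firstHit P' (φ '' T) m u = ∑ b, P s b * firstHit P T m b :=
      (Fintype.sum_of_injective φ hφ _ _ (fun u hu => by rw [hout s u hu, zero_mul])
        fun b => by rw [hP, ih]).symm
    classical
    simp only [firstHit]
    rw [Set.indicator_apply, Set.indicator_apply]
    simp only [Set.mem_compl_iff, hφ.mem_set_image, hsum]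

theorem ereachProb_map {S' : Type} [Fintype S'] {P' : S' → S' → ℝ≥0∞} {φ : S → S'}
    (hφ : Function.Injective φ) (hP : ∀ a b, P' (φ a) (φ b) = P a b)
    (hout : ∀ a u, u ∉ Set.range φ → P' (φ a) u = 0) (s : S) :
    ereachProb P' (φ '' T) (φ s) = ereachProb P T s :=
  tsum_congr fun m => firstHit_map hφ hP hout m s

end FirstHit

section SimplePMC
variable {X : Type} {k : ℕ}

theorem instP_nonneg (D : SimplePMC X k) {val : X → ℝ} (hval : WDVal val) (s t : Fin k) :
    0 ≤ instP D val s t := by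
  rcases D.simple s t with ⟨q, hq, hp⟩ | ⟨x, hp⟩ | ⟨x, hp⟩ <;> rw [instP, hp]
  · simpa using hq
  · simpa using (hval x).1
  · simpa using (hval x).2

noncomputable def instPENNReal (D : SimplePMC X k) (val : X → ℝ) :
    Fin k → Fin k → ℝ≥0∞ :=
  fun s t => ENNReal.ofReal (instP D val s t)

theorem sum_instPENNReal (D : SimplePMC X k) {val : X → ℝ} (hval : WDVal val) (s : Fin k) :
    ∑ t, instPENNReal D val s t = 1 := by
  unfold instPENNReal
  rw [← ENNReal.ofReal_sum_of_nonneg fun t _ => instP_nonneg D hval s t]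
  simp [instP, ← map_sum, D.rowSum]

theorem reachProb_instP_eq_toReal (D : SimplePMC X k) {val : X → ℝ} (hval : WDVal val)
    (T : Set (Fin k)) (s : Fin k) :
    reachProb (instP D val) T s = (ereachProb (instPENNReal D val) T s).toReal :=
  reachProb_eq_toReal_ereachProb (instP_nonneg D hval) s

noncomputable def loopEntry (x : X) : Bool → MvPolynomial X ℚ
  | true => .X x
  | false => 1 - .X x

theorem simpleEntry_loopEntry (x : X) (b : Bool) : SimpleEntry (loopEntry x b) := by
  cases b
  · exact .inr (.inr ⟨x, rfl⟩)
  · exact .inr (.inl ⟨x, rfl⟩)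

theorem loopEntry_not (x : X) (b : Bool) : loopEntry x (!b) = 1 - loopEntry x b := by
  cases b <;> simp [loopEntry]

theorem aeval_loopEntry (val : X → ℝ) (x : X) (b : Bool) :
    MvPolynomial.aeval val (loopEntry x b) = if b then val x else 1 - val x := by
  cases b <;> simp [loopEntry]

theorem aeval_loopEntry_mem_Icc {val : X → ℝ} (hval : WDVal val) (x : X) (b : Bool) :
    MvPolynomial.aeval val (loopEntry x b) ∈ Set.Icc 0 1 := by
  obtain ⟨h0, h1⟩ := hval x
  rw [aeval_loopEntry]
  split_ifs <;> constructor <;> linarith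

theorem aeval_loopEntry_ne_one {val : X → ℝ} (hval : GPVal val) (x : X) (b : Bool) :
    MvPolynomial.aeval val (loopEntry x b) ≠ 1 := by
  obtain ⟨h0, h1⟩ := hval x
  rw [aeval_loopEntry]
  split_ifs <;> intro h <;> linarith

theorem exists_aeval_loopEntry_eq_one {val : X → ℝ} {x : X} (hx : val x = 0 ∨ val x = 1) :
    ∃ b, MvPolynomial.aeval val (loopEntry x b) = 1 := by
  rcases hx with h | h
  · exact ⟨false, by simp [aeval_loopEntry, h]⟩
  · exact ⟨true, by simp [aeval_loopEntry, h]⟩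

noncomputable def SimplePMC.prepend (D : SimplePMC X k) (x : X) (b : Bool) :
    SimplePMC X (k + 1) where
  init := Fin.last k
  P := Fin.snoc (fun s => Fin.snoc (D.P s) 0)
    (Fin.snoc (Pi.single D.init (loopEntry x !b)) (loopEntry x b))
  simple u t := by
    induction u using Fin.lastCases <;> induction t using Fin.lastCases <;>
      simp only [Fin.snoc_castSucc, Fin.snoc_last]
    case last.last => exact simpleEntry_loopEntry x b
    case last.cast t =>
      by_cases ht : t = D.init
      · rw [ht, Pi.single_eq_same]
        exact simpleEntry_loopEntry x !b
      · rw [Pi.single_eq_of_ne ht]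
        exact .inl ⟨0, le_rfl, by simp⟩
    case cast.last => exact .inl ⟨0, le_rfl, by simp⟩
    case cast.cast s t => exact D.simple s t
  rowSum u := by
    induction u using Fin.lastCases <;>
      simp only [Fin.snoc_castSucc, Fin.snoc_last, Fin.sum_univ_castSucc]
    case last =>
      rw [Finset.sum_pi_single', if_pos (Finset.mem_univ _), loopEntry_not, sub_add_cancel]
    case cast s => rw [D.rowSum, add_zero]

section Prepend
variable (D : SimplePMC X k) (x : X) (b : Bool) (val : X → ℝ)

@[simp]
theorem instP_prepend_castSucc_castSucc (s t : Fin k) :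
    instP (D.prepend x b) val s.castSucc t.castSucc = instP D val s t := by
  simp [instP, SimplePMC.prepend]

@[simp]
theorem instP_prepend_castSucc_last (s : Fin k) :
    instP (D.prepend x b) val s.castSucc (Fin.last k) = 0 := by
  simp [instP, SimplePMC.prepend]

@[simp]
theorem instP_prepend_last_castSucc (t : Fin k) :
    instP (D.prepend x b) val (Fin.last k) t.castSucc =
      if t = D.init then 1 - MvPolynomial.aeval val (loopEntry x b) else 0 := by
  simp only [instP, SimplePMC.prepend, Fin.snoc_last, Fin.snoc_castSucc, Pi.single_apply]
  split_ifs <;> simp [loopEntry_not]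

@[simp]
theorem instP_prepend_last_last :
    instP (D.prepend x b) val (Fin.last k) (Fin.last k) =
      MvPolynomial.aeval val (loopEntry x b) := by
  simp [instP, SimplePMC.prepend]

variable {val} in
theorem ereachProb_prepend (hval : WDVal val) (T : Set (Fin k)) :
    ereachProb (instPENNReal (D.prepend x b) val) (Fin.castSucc '' T) (D.prepend x b).init =
      if MvPolynomial.aeval val (loopEntry x b) = 1 then 0
      else ereachProb (instPENNReal D val) T D.init := by
  have hlast : Fin.last k ∉ Fin.castSucc '' T := fun ⟨t, _, ht⟩ => Fin.castSucc_ne_last t ht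
  have hp := aeval_loopEntry_mem_Icc hval x b
  set p := MvPolynomial.aeval val (loopEntry x b)
  have hout (u : Fin (k + 1)) (hu : u ≠ Fin.last k) (hu' : u ≠ D.init.castSucc) :
      instPENNReal (D.prepend x b) val (Fin.last k) u = 0 := by
    obtain ⟨t, rfl⟩ := (Fin.eq_castSucc_or_eq_last u).resolve_right hu
    have ht : t ≠ D.init := fun h => hu' (h ▸ rfl)
    simp [instPENNReal, ht]
  show ereachProb _ _ (Fin.last k) = _
  split_ifs with hloop
  · refine ereachProb_eq_zero_of_closed (A := {Fin.last k})
      (Set.disjoint_singleton_left.2 hlast) (fun a ha u hu => ?_) rfl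
    rw [Set.mem_singleton_iff.1 ha]
    rcases eq_or_ne u D.init.castSucc with rfl | hu'
    · simp [instPENNReal, p, hloop]
    · exact hout u hu hu'
  · have hsum : instPENNReal (D.prepend x b) val (Fin.last k) (Fin.last k) +
        instPENNReal (D.prepend x b) val (Fin.last k) D.init.castSucc = 1 := by
      simp [instPENNReal, p, ← ENNReal.ofReal_add hp.1 (sub_nonneg.2 hp.2)]
    have hexit : instPENNReal (D.prepend x b) val (Fin.last k) D.init.castSucc ≠ 0 := by
      simpa [instPENNReal, p] using lt_of_le_of_ne hp.2 hloop
    rw [ereachProb_eq_of_loop (fun s => (sum_instPENNReal _ hval s).le) hlast hout hsum hexit,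
      ereachProb_map (P := instPENNReal D val) (Fin.castSucc_injective k)
        (fun _ _ => by simp [instPENNReal])]
    intro a u hu
    rw [(Fin.eq_castSucc_or_eq_last u).resolve_left fun ⟨t, ht⟩ => hu ⟨t, ht.symm⟩]
    simp [instPENNReal]

end Prepend

end SimplePMC

section PrependAll
variable {X : Type} {n : ℕ}

noncomputable def SimplePMC.prependAll (D : SimplePMC X n) :
    (N : ℕ) → (Fin N → X × Bool) → SimplePMC X (n + N)
  | 0, _ => D
  | N + 1, c => (D.prependAll N (c ∘ Fin.castSucc)).prepend (c (Fin.last N)).1 (c (Fin.last N)).2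

theorem ereachProb_prependAll (D : SimplePMC X n) {val : X → ℝ} (hval : WDVal val)
    (T : Set (Fin n)) (N : ℕ) (c : Fin N → X × Bool) :
    ereachProb (instPENNReal (D.prependAll N c) val) (Fin.castAdd N '' T) (D.prependAll N c).init =
      if ∃ i, MvPolynomial.aeval val (loopEntry (c i).1 (c i).2) = 1 then 0
      else ereachProb (instPENNReal D val) T D.init := by
  induction N with
  | zero => simp [SimplePMC.prependAll]
  | succ N ih =>
    have hT : Fin.castAdd (N + 1) '' T = Fin.castSucc '' (Fin.castAdd N '' T) := by
      rw [Set.image_image]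
      simp only [Fin.castSucc_castAdd]
    rw [hT, SimplePMC.prependAll, ereachProb_prepend _ _ _ hval, ih]
    simp only [Fin.exists_fin_succ', Function.comp_apply]
    split_ifs <;> tauto

end PrependAll

/-- Gadget construction of Proposition 12 of the paper: every simple pMC `D` with `n` states
and target set `T` can be extended to a simple pMC `D'` with `n + 2·|X|` states (and the same
target set, embedded) such that `D'` has the same reachability probability as `D` on every
graph-preserving valuation, and reachability probability `0` on every well-defined valuation
that is not graph-preserving. -/
theorem exists_gp_filter_gadget {X : Type} [Fintype X] {n : ℕ}
    (D : SimplePMC X n) (T : Set (Fin n)) :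
    ∃ D' : SimplePMC X (n + 2 * Fintype.card X),
      (∀ val : X → ℝ, GPVal val →
        reachProb (instP D' val) (Fin.castAdd (2 * Fintype.card X) '' T) D'.init =
          reachProb (instP D val) T D.init) ∧
      (∀ val : X → ℝ, WDVal val → (∃ x, val x = 0 ∨ val x = 1) →
        reachProb (instP D' val) (Fin.castAdd (2 * Fintype.card X) '' T) D'.init = 0) := by
  let e : X × Bool ≃ Fin (2 * Fintype.card X) := Fintype.equivFinOfCardEq (by simp [mul_comm])
  refine ⟨D.prependAll _ e.symm, fun val hgp => ?_, fun val hwd hx => ?_⟩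
  · have hwd : WDVal val := fun x => Set.Ioo_subset_Icc_self (hgp x)
    rw [reachProb_instP_eq_toReal _ hwd, reachProb_instP_eq_toReal _ hwd,
      ereachProb_prependAll _ hwd, if_neg fun ⟨i, hi⟩ => aeval_loopEntry_ne_one hgp _ _ hi]
  · obtain ⟨x, hx⟩ := hx
    obtain ⟨b, hb⟩ := exists_aeval_loopEntry_eq_one hx
    rw [reachProb_instP_eq_toReal _ hwd, ereachProb_prependAll _ hwd,
      if_pos ⟨e (x, b), by simpa using hb⟩, ENNReal.toReal_zero]
end
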